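/- arXiv:2104.09443 — 5 statements merged into one kernel-verified Lean document; each statement's English description precedes it below -/
import Mathlib

section
/- Let θ ∈ (0,1). Then ∫₀^∞ t^{2θ−3} · K(t)² dt ≤ 2 Σₙ λₙ ∫₀^∞ t^{2θ−3} · Kₙ(t)² dt, where for t > 0, K(t) is the infimum over all pairs of sequences v₀ : ℕ → E, v₁ : ℕ → F with v₀ₙ + v₁ₙ = bₙ for every n of the quantity (Σₙ λₙ ‖v₀ₙ‖_E²)^{1/2} + t (Σₙ λₙ ‖v₁ₙ‖_F²)^{1/2}, and Kₙ(t) is the infimum over all v₀ ∈ E, v₁ ∈ F with v₀ + v₁ = bₙ of ‖v₀‖_E + t ‖v₁‖_F. (All infima, sums and integrals are taken in the extended nonnegative reals [0,∞], with the infimum over the empty set equal to ∞; the integrals are Lebesgue integrals over (0,∞).) -/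
open scoped ENNReal NNReal

open MeasureTheory

/-! For any admissible decomposition `b n = v₀ n + ι (v₁ n)`, the weighted K-functional at `t` is
at most `‖v₀‖ + t ‖v₁‖` measured in `ℓ²_λ`, and `(x + y)² ≤ 2 (x² + y²)` bounds its square by
`2 ∑ λₙ (‖v₀ n‖ + t ‖v₁ n‖)²`. The constraint decouples over `n`, so the infimum of the right-hand
side over decompositions is `2 ∑ λₙ Kₙ(t)²` (choose near-minimisers with summable errors).
Integrating against `t^(2θ-3)` and exchanging integral and sum by monotone convergence gives the
claim. -/

namespace ENNReal

theorem add_sq_le (x y : ℝ≥0∞) : (x + y) ^ 2 ≤ 2 * (x ^ 2 + y ^ 2) := by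
  have h := rpow_add_le_mul_rpow_add_rpow x y one_le_two
  norm_num [rpow_two] at h
  exact h

theorem rpow_half_sq (x : ℝ≥0∞) : (x ^ (1 / 2 : ℝ)) ^ 2 = x := by
  rw [← rpow_natCast, ← rpow_mul]
  norm_num

theorem mul_sq_iInf {ι : Sort*} [Nonempty ι] {c : ℝ≥0∞} (hc : c ≠ ⊤) (f : ι → ℝ≥0∞) :
    c * (⨅ i, f i) ^ 2 = ⨅ i, c * f i ^ 2 := by
  rw [Monotone.map_iInf_of_continuousAt (f := (· ^ 2)) (ENNReal.continuous_pow 2).continuousAt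
    (pow_left_mono 2) (by simp)]
  exact mul_iInf (by simp [hc])

theorem iInf_tsum_le_tsum_iInf {ι : Type*} [Countable ι] {α : ι → Type*}
    (f : ∀ i, α i → ℝ≥0∞) : ⨅ v : ∀ i, α i, ∑' i, f i (v i) ≤ ∑' i, ⨅ a, f i a := by
  refine le_of_forall_pos_le_add fun ε hε hfin => ?_
  obtain ⟨δ, hδ, hδε⟩ := exists_pos_sum_of_countable' (coe_ne_zero.2 hε.ne') ι
  have hnear : ∀ i, ∃ a, f i a < (⨅ a, f i a) + δ i := fun i =>
    iInf_lt_iff.1 <| lt_add_right (ne_top_of_le_ne_top hfin.ne (ENNReal.le_tsum i)) (hδ i).ne'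
  choose v hv using hnear
  calc ⨅ v : ∀ i, α i, ∑' i, f i (v i)
      ≤ ∑' i, f i (v i) := iInf_le _ v
    _ ≤ ∑' i, ((⨅ a, f i a) + δ i) := ENNReal.tsum_le_tsum fun i => (hv i).le
    _ = ∑' i, (⨅ a, f i a) + ∑' i, δ i := ENNReal.tsum_add
    _ ≤ ∑' i, (⨅ a, f i a) + ε := by gcongr

end ENNReal

theorem MeasureTheory.lintegral_tsum_const_mul {α β : Type*} [MeasurableSpace α] [Countable β]
    {μ : Measure α} {f : β → α → ℝ≥0∞} (hf : ∀ n, AEMeasurable (f n) μ) (c : β → ℝ≥0∞) :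
    ∫⁻ x, ∑' n, c n * f n x ∂μ = ∑' n, c n * ∫⁻ x, f n x ∂μ := by
  rw [lintegral_tsum fun n => (hf n).const_mul (c n)]
  exact tsum_congr fun n => lintegral_const_mul'' (c n) (hf n)

noncomputable section KFunctional

variable {E F : Type*} [SeminormedAddCommGroup E] [SeminormedAddCommGroup F]

def kFunctional (ι : F → E) (T : ℝ≥0∞) (x : E) : ℝ≥0∞ :=
  ⨅ (v₀ : E) (v₁ : F) (_ : v₀ + ι v₁ = x), ((‖v₀‖₊ : ℝ≥0∞) + T * ‖v₁‖₊)

/-- The K-functional of the couple of weighted `ℓ²`-spaces `(ℓ²_c(E), ℓ²_c(F))`; for `c = λ` these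
are the Hilbert–Schmidt spaces from `L²_λ` into `E` and `F`, read in coefficients. -/
def weightedKFunctional (ι : F → E) (c : ℕ → ℝ≥0∞) (T : ℝ≥0∞) (b : ℕ → E) : ℝ≥0∞ :=
  ⨅ (v₀ : ℕ → E) (v₁ : ℕ → F) (_ : ∀ n, v₀ n + ι (v₁ n) = b n),
    ((∑' n, c n * (‖v₀ n‖₊ : ℝ≥0∞) ^ 2) ^ (1 / 2 : ℝ) +
      T * (∑' n, c n * (‖v₁ n‖₊ : ℝ≥0∞) ^ 2) ^ (1 / 2 : ℝ))

theorem kFunctional_mono_left (ι : F → E) (x : E) : Monotone fun T => kFunctional ι T x :=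
  fun _ _ hST => iInf₂_mono fun _ _ => iInf_mono fun _ => by gcongr

theorem kFunctional_eq_iInf_subtype (ι : F → E) (T : ℝ≥0∞) (x : E) :
    kFunctional ι T x =
      ⨅ p : {p : E × F // p.1 + ι p.2 = x}, ((‖p.1.1‖₊ : ℝ≥0∞) + T * ‖p.1.2‖₊) := by
  rw [kFunctional, iInf_subtype, iInf_prod]

theorem sq_weightedKFunctional_le_of_add_eq (ι : F → E) (c : ℕ → ℝ≥0∞) (T : ℝ≥0∞)
    {b v₀ : ℕ → E} {v₁ : ℕ → F} (hv : ∀ n, v₀ n + ι (v₁ n) = b n) :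
    weightedKFunctional ι c T b ^ 2 ≤ 2 * ∑' n, c n * ((‖v₀ n‖₊ : ℝ≥0∞) + T * ‖v₁ n‖₊) ^ 2 := by
  set A := ∑' n, c n * (‖v₀ n‖₊ : ℝ≥0∞) ^ 2
  set B := ∑' n, c n * (‖v₁ n‖₊ : ℝ≥0∞) ^ 2
  calc weightedKFunctional ι c T b ^ 2
      ≤ (A ^ (1 / 2 : ℝ) + T * B ^ (1 / 2 : ℝ)) ^ 2 := by
        gcongr
        exact iInf₂_le_of_le v₀ v₁ (iInf_le _ hv)
    _ ≤ 2 * (A + T ^ 2 * B) := by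
        simpa only [mul_pow, ENNReal.rpow_half_sq] using
          ENNReal.add_sq_le (A ^ (1 / 2 : ℝ)) (T * B ^ (1 / 2 : ℝ))
    _ = 2 * ∑' n, c n * ((‖v₀ n‖₊ : ℝ≥0∞) ^ 2 + (T * ‖v₁ n‖₊) ^ 2) := by
        rw [← ENNReal.tsum_mul_left, ← ENNReal.tsum_add]
        congr 1
        exact tsum_congr fun n => by ring
    _ ≤ 2 * ∑' n, c n * ((‖v₀ n‖₊ : ℝ≥0∞) + T * ‖v₁ n‖₊) ^ 2 := by
        gcongr with n
        exact pow_add_pow_le zero_le zero_le two_ne_zero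

theorem sq_weightedKFunctional_le (ι : F → E) {c : ℕ → ℝ≥0∞} (hc : ∀ n, c n ≠ ⊤) (T : ℝ≥0∞)
    (b : ℕ → E) :
    weightedKFunctional ι c T b ^ 2 ≤ 2 * ∑' n, c n * kFunctional ι T (b n) ^ 2 := by
  let Adm (n : ℕ) := {p : E × F // p.1 + ι p.2 = b n}
  have : ∀ n, Nonempty (Adm n) := fun n => ⟨⟨(b n - ι 0, 0), sub_add_cancel _ _⟩⟩
  calc weightedKFunctional ι c T b ^ 2
      ≤ ⨅ v : ∀ n, Adm n, 2 * ∑' n, c n * ((‖(v n).1.1‖₊ : ℝ≥0∞) + T * ‖(v n).1.2‖₊) ^ 2 :=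
        le_iInf fun v => sq_weightedKFunctional_le_of_add_eq ι c T fun n => (v n).2
    _ = 2 * ⨅ v : ∀ n, Adm n, ∑' n, c n * ((‖(v n).1.1‖₊ : ℝ≥0∞) + T * ‖(v n).1.2‖₊) ^ 2 :=
        (ENNReal.mul_iInf_of_ne two_ne_zero ENNReal.ofNat_ne_top).symm
    _ ≤ 2 * ∑' n, ⨅ p : Adm n, c n * ((‖p.1.1‖₊ : ℝ≥0∞) + T * ‖p.1.2‖₊) ^ 2 := by
        gcongr
        exact ENNReal.iInf_tsum_le_tsum_iInf _
    _ = 2 * ∑' n, c n * kFunctional ι T (b n) ^ 2 := by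
        congr 1
        refine tsum_congr fun n => ?_
        rw [kFunctional_eq_iInf_subtype, ENNReal.mul_sq_iInf (hc n)]

end KFunctional

theorem stmt_1_general {E F : Type*} [NormedAddCommGroup E] [InnerProductSpace ℝ E]
    [NormedAddCommGroup F] [Module ℝ F]
    (ι : F →ₗ[ℝ] E)
    (lam : ℕ → ℝ) (b : ℕ → E)
    (θ : ℝ) :
    (∫⁻ t in Set.Ioi (0:ℝ),
        ENNReal.ofReal (t ^ (2*θ - 3)) *
          (⨅ (v₀ : ℕ → E) (v₁ : ℕ → F) (_ : ∀ n, v₀ n + ι (v₁ n) = b n),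
            ((∑' n, ENNReal.ofReal (lam n) * (‖v₀ n‖₊ : ℝ≥0∞) ^ 2) ^ (1/2 : ℝ) +
              ENNReal.ofReal t *
                (∑' n, ENNReal.ofReal (lam n) * (‖v₁ n‖₊ : ℝ≥0∞) ^ 2) ^ (1/2 : ℝ))) ^ 2)
      ≤ 2 * ∑' n, ENNReal.ofReal (lam n) *
          ∫⁻ t in Set.Ioi (0:ℝ),
            ENNReal.ofReal (t ^ (2*θ - 3)) *
              (⨅ (v₀ : E) (v₁ : F) (_ : v₀ + ι v₁ = b n),
                ((‖v₀‖₊ : ℝ≥0∞) + ENNReal.ofReal t * (‖v₁‖₊ : ℝ≥0∞))) ^ 2 := by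
  set c : ℕ → ℝ≥0∞ := fun n => ENNReal.ofReal (lam n)
  set w : ℝ → ℝ≥0∞ := fun t => ENNReal.ofReal (t ^ (2 * θ - 3))
  change ∫⁻ t in Set.Ioi 0, w t * weightedKFunctional ι c (ENNReal.ofReal t) b ^ 2
    ≤ 2 * ∑' n, c n * ∫⁻ t in Set.Ioi 0, w t * kFunctional ι (ENNReal.ofReal t) (b n) ^ 2
  have hK : ∀ n, Measurable fun t => w t * kFunctional ι (ENNReal.ofReal t) (b n) ^ 2 := fun n =>
    (measurable_id.pow_const _).ennreal_ofReal.mul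
      (((kFunctional_mono_left ι (b n)).comp ENNReal.ofReal_mono).measurable.pow_const 2)
  calc ∫⁻ t in Set.Ioi 0, w t * weightedKFunctional ι c (ENNReal.ofReal t) b ^ 2
      ≤ ∫⁻ t in Set.Ioi 0, w t * (2 * ∑' n, c n * kFunctional ι (ENNReal.ofReal t) (b n) ^ 2) :=
        lintegral_mono fun t => by
          gcongr
          exact sq_weightedKFunctional_le ι (fun n => ENNReal.ofReal_ne_top) _ b
    _ = ∫⁻ t in Set.Ioi 0, ∑' n,
          (2 * c n) * (w t * kFunctional ι (ENNReal.ofReal t) (b n) ^ 2) := by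
        simp_rw [← ENNReal.tsum_mul_left]
        exact lintegral_congr fun t => tsum_congr fun n => by ring
    _ = 2 * ∑' n, c n * ∫⁻ t in Set.Ioi 0, w t * kFunctional ι (ENNReal.ofReal t) (b n) ^ 2 := by
        rw [lintegral_tsum_const_mul fun n => (hK n).aemeasurable, ← ENNReal.tsum_mul_left]
        simp_rw [mul_assoc]

/-- Lemma A.1 (quantitative content): the weighted K-functional of the
coefficient sequence `b` is controlled, in `L²((0,∞), t^{2θ-3}dt)`, by the
weighted sum of the componentwise K-functionals. All infima, sums and
(lower Lebesgue) integrals are in `ℝ≥0∞`. -/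
theorem stmt_1 {E F : Type*} [NormedAddCommGroup E] [InnerProductSpace ℝ E] [CompleteSpace E]
    [NormedAddCommGroup F] [Module ℝ F]
    (ι : F →ₗ[ℝ] E) (hι : Function.Injective ι)
    (lam : ℕ → ℝ) (hlam : ∀ n, 0 < lam n) (b : ℕ → E)
    (θ : ℝ) (hθ : θ ∈ Set.Ioo (0:ℝ) 1) :
    (∫⁻ t in Set.Ioi (0:ℝ),
        ENNReal.ofReal (t ^ (2*θ - 3)) *
          (⨅ (v₀ : ℕ → E) (v₁ : ℕ → F) (_ : ∀ n, v₀ n + ι (v₁ n) = b n),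
            ((∑' n, ENNReal.ofReal (lam n) * (‖v₀ n‖₊ : ℝ≥0∞) ^ 2) ^ (1/2 : ℝ) +
              ENNReal.ofReal t *
                (∑' n, ENNReal.ofReal (lam n) * (‖v₁ n‖₊ : ℝ≥0∞) ^ 2) ^ (1/2 : ℝ))) ^ 2)
      ≤ 2 * ∑' n, ENNReal.ofReal (lam n) *
          ∫⁻ t in Set.Ioi (0:ℝ),
            ENNReal.ofReal (t ^ (2*θ - 3)) *
              (⨅ (v₀ : E) (v₁ : F) (_ : v₀ + ι v₁ = b n),
                ((‖v₀‖₊ : ℝ≥0∞) + ENNReal.ofReal t * (‖v₁‖₊ : ℝ≥0∞))) ^ 2 :=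
  stmt_1_general ι lam b θ
end

section
/- There exists a constant C > 0 such that for every integer j ≥ 1, every real x ≥ 0 and every real γ with 0 ≤ γ ≤ 2, one has x^{γ/2} · |e^{−jx} − (1 + x)^{−j}| ≤ C / j (with the convention 0^0 = 1). -/
/-! Write `D = (1+x)^{-j} - e^{-jx}`, which is nonnegative. Since `x^{γ/2} ≤ 1 + x`, it suffices
to show `j D ≤ 2` and `j x D ≤ 1`. The second is Bernoulli's inequality `j x ≤ (1+x)^j`.
For the first, write `(1+x)^{-j} = e^{-j log(1+x)}`: convexity of `exp` and
`log(1+x) ≥ 2x/(x+2)` give `D ≤ j x² / ((x+2)(1+x)^j)`, and the binomial term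
`C(j+1,2) x² ≤ (1+x)^{j+1}` bounds this by `2/j`. -/

open Real

theorem exp_neg_sub_exp_neg_le (a b : ℝ) : exp (-a) - exp (-b) ≤ (b - a) * exp (-a) := by
  have h : exp (-a) * (a - b + 1) ≤ exp (-b) := by
    calc exp (-a) * (a - b + 1) ≤ exp (-a) * exp (a - b) := by
          gcongr; exact add_one_le_exp _
      _ = exp (-b) := by rw [← exp_add]; ring_nf
  linarith

theorem sub_log_one_add_le {x : ℝ} (hx : 0 ≤ x) : x - log (1 + x) ≤ x ^ 2 / (x + 2) := by
  have h := le_log_one_add_of_nonneg hx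
  have : x - 2 * x / (x + 2) = x ^ 2 / (x + 2) := by field_simp; ring
  linarith

theorem choose_two_mul_sq_le_one_add_pow {x : ℝ} (hx : 0 ≤ x) (n : ℕ) :
    (n.choose 2 : ℝ) * x ^ 2 ≤ (1 + x) ^ n := by
  rcases lt_or_ge n 2 with hn | hn
  · rw [Nat.choose_eq_zero_of_lt hn, Nat.cast_zero, zero_mul]; positivity
  · rw [add_comm, add_pow, mul_comm]
    simp only [one_pow, mul_one]
    exact Finset.single_le_sum (f := fun m => x ^ m * (n.choose m : ℝ))
      (fun m _ => by positivity) (Finset.mem_range.2 (by omega))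

theorem natCast_mul_sq_le_two_mul_one_add_pow_succ {x : ℝ} (hx : 0 ≤ x) (j : ℕ) :
    ((j : ℝ) * x) ^ 2 ≤ 2 * (1 + x) ^ (j + 1) := by
  have h := choose_two_mul_sq_le_one_add_pow hx (j + 1)
  rw [Nat.cast_choose_two, Nat.cast_add_one, add_sub_cancel_right] at h
  nlinarith [sq_nonneg x, mul_nonneg (Nat.cast_nonneg j : (0:ℝ) ≤ j) (sq_nonneg x)]

theorem rpow_le_one_add {x s : ℝ} (hx : 0 ≤ x) (hs₀ : 0 ≤ s) (hs₁ : s ≤ 1) :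
    x ^ s ≤ 1 + x :=
  calc x ^ s ≤ (1 + x) ^ s := by gcongr; linarith
    _ ≤ (1 + x) ^ (1 : ℝ) := rpow_le_rpow_of_exponent_le (by linarith) hs₁
    _ = 1 + x := rpow_one _

noncomputable def backwardEulerDefect (j : ℕ) (x : ℝ) : ℝ :=
  ((1 + x) ^ j)⁻¹ - exp (-(j * x))

theorem inv_one_add_pow_eq_exp {x : ℝ} (hx : 0 < 1 + x) (j : ℕ) :
    ((1 + x) ^ j)⁻¹ = exp (-(j * log (1 + x))) := by
  rw [exp_neg, exp_nat_mul, exp_log hx]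

theorem backwardEulerDefect_nonneg {x : ℝ} (hx : 0 ≤ x) (j : ℕ) :
    0 ≤ backwardEulerDefect j x := by
  rw [backwardEulerDefect, inv_one_add_pow_eq_exp (by linarith), sub_nonneg]
  gcongr
  linarith [log_le_sub_one_of_pos (by linarith : 0 < 1 + x)]

theorem backwardEulerDefect_le_inv {x : ℝ} (j : ℕ) :
    backwardEulerDefect j x ≤ ((1 + x) ^ j)⁻¹ :=
  sub_le_self _ (exp_pos _).le

theorem backwardEulerDefect_le {x : ℝ} (hx : 0 ≤ x) (j : ℕ) :
    backwardEulerDefect j x ≤ j * (x ^ 2 / (x + 2)) * ((1 + x) ^ j)⁻¹ := by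
  rw [backwardEulerDefect, inv_one_add_pow_eq_exp (by linarith)]
  calc _ ≤ (j * x - j * log (1 + x)) * exp (-(j * log (1 + x))) := exp_neg_sub_exp_neg_le _ _
    _ ≤ _ := by
      rw [← mul_sub]
      gcongr
      exact sub_log_one_add_le hx

theorem natCast_mul_backwardEulerDefect_le_two {x : ℝ} (hx : 0 ≤ x) (j : ℕ) :
    j * backwardEulerDefect j x ≤ 2 := by
  have hpow : 0 < (1 + x) ^ j := by positivity
  calc (j : ℝ) * backwardEulerDefect j x
        ≤ j * (j * (x ^ 2 / (x + 2)) * ((1 + x) ^ j)⁻¹) := by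
        gcongr
        exact backwardEulerDefect_le hx j
    _ = ((j : ℝ) * x) ^ 2 / ((x + 2) * (1 + x) ^ j) := by field_simp
    _ ≤ ((j : ℝ) * x) ^ 2 / (1 + x) ^ (j + 1) := by
        rw [pow_succ' (1 + x)]
        gcongr _ / (?_ * _)
        linarith
    _ ≤ 2 := by
        rw [div_le_iff₀ (by positivity)]
        exact natCast_mul_sq_le_two_mul_one_add_pow_succ hx j

theorem natCast_mul_mul_backwardEulerDefect_le_one {x : ℝ} (hx : 0 ≤ x) (j : ℕ) :
    j * x * backwardEulerDefect j x ≤ 1 := by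
  have hpow : 0 < (1 + x) ^ j := by positivity
  have hBernoulli : (j : ℝ) * x ≤ (1 + x) ^ j := by
    linarith [one_add_mul_le_pow (by linarith : (-2 : ℝ) ≤ x) j]
  calc (j : ℝ) * x * backwardEulerDefect j x ≤ j * x * ((1 + x) ^ j)⁻¹ := by
        gcongr
        exact backwardEulerDefect_le_inv j
    _ ≤ 1 := by rw [← div_eq_mul_inv, div_le_one hpow]; exact hBernoulli

/-- Scalar (spectral) form of the backward-Euler error estimate
`‖e^{jτA_h} − (I − τA_h)^{−j}‖ ≤ C τ^{−γ/2} j^{−1}`: there is `C > 0` with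
`x^{γ/2} |e^{−jx} − (1+x)^{−j}| ≤ C / j` for all integers `j ≥ 1`, reals
`x ≥ 0` and `0 ≤ γ ≤ 2` (real powers, `0^0 = 1`). -/
theorem stmt_6 :
    ∃ C : ℝ, 0 < C ∧ ∀ j : ℕ, 1 ≤ j → ∀ x : ℝ, 0 ≤ x → ∀ γ : ℝ, 0 ≤ γ → γ ≤ 2 →
      x ^ (γ / 2) * |Real.exp (-(j : ℝ) * x) - (1 + x) ^ (-(j : ℝ))| ≤ C / j := by
  refine ⟨3, by norm_num, fun j hj x hx γ hγ₀ hγ₂ => ?_⟩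
  have hj : (0 : ℝ) < j := by exact_mod_cast hj
  have hdefect :
      |exp (-(j : ℝ) * x) - (1 + x) ^ (-(j : ℝ))| = backwardEulerDefect j x := by
    rw [rpow_neg (by linarith), rpow_natCast, neg_mul, abs_sub_comm,
      ← backwardEulerDefect, abs_of_nonneg (backwardEulerDefect_nonneg hx j)]
  rw [hdefect, le_div_iff₀ hj]
  calc x ^ (γ / 2) * backwardEulerDefect j x * j
        ≤ (1 + x) * backwardEulerDefect j x * j := by
        gcongr
        · exact backwardEulerDefect_nonneg hx j
        · exact rpow_le_one_add hx (by linarith) (by linarith)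
    _ = j * backwardEulerDefect j x + j * x * backwardEulerDefect j x := by ring
    _ ≤ 2 + 1 := add_le_add (natCast_mul_backwardEulerDefect_le_two hx j)
        (natCast_mul_mul_backwardEulerDefect_le_one hx j)
    _ = 3 := by norm_num
end

section
/- Let J be a positive integer, τ a real number, and let F, G : {0, …, J−1} → V. Suppose Y : {0, …, J} → V satisfies Y_0 = 0 and Y_{j+1} − Y_j = τ A Y_{j+1} + F_j for all 0 ≤ j < J, and P : {0, …, J} → V satisfies P_J = 0 and P_j − P_{j+1} = τ A P_j + G_j for all 0 ≤ j < J. Then Σ_{j=0}^{J−1} ⟨Y_j, G_j⟩ = Σ_{j=0}^{J−1} ⟨F_j, P_{j+1}⟩. -/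
open scoped RealInnerProductSpace

/-- Discrete duality identity (equation (3.8)) between the forward and backward
implicit Euler schemes, for a symmetric linear map `A` on a real inner product
space. -/
theorem stmt_7 {V : Type*} [NormedAddCommGroup V] [InnerProductSpace ℝ V]
    (A : V →ₗ[ℝ] V) (hAsym : ∀ v w : V, ⟪A v, w⟫ = ⟪v, A w⟫)
    (J : ℕ) (hJ : 0 < J) (τ : ℝ) (F G : ℕ → V) (Y P : ℕ → V)
    (hY0 : Y 0 = 0) (hY : ∀ j < J, Y (j + 1) - Y j = τ • A (Y (j + 1)) + F j)
    (hPJ : P J = 0) (hP : ∀ j < J, P j - P (j + 1) = τ • A (P j) + G j) :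
    ∑ j ∈ Finset.range J, ⟪Y j, G j⟫ = ∑ j ∈ Finset.range J, ⟪F j, P (j + 1)⟫ := by
  set d : ℕ → ℝ := fun j => ⟪Y j, P j⟫ - τ * ⟪Y j, A (P j)⟫ with hd
  have key : ∀ j ∈ Finset.range J,
      ⟪Y j, G j⟫ - ⟪F j, P (j + 1)⟫ = d j - d (j + 1) := by
    intro j hj
    rw [Finset.mem_range] at hj
    have hGj : G j = P j - P (j + 1) - τ • A (P j) := by
      exact eq_sub_of_add_eq ((add_comm _ _).trans (hP j hj).symm)
    have hFj : F j = Y (j + 1) - Y j - τ • A (Y (j + 1)) := by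
      exact eq_sub_of_add_eq ((add_comm _ _).trans (hY j hj).symm)
    rw [hGj, hFj, hd]
    simp only [inner_sub_right, inner_sub_left, real_inner_smul_right,
      real_inner_smul_left]
    rw [hAsym (Y (j + 1)) (P (j + 1))]
    ring
  have hsum : ∑ j ∈ Finset.range J, (⟪Y j, G j⟫ - ⟪F j, P (j + 1)⟫)
      = d 0 - d J := by
    rw [Finset.sum_congr rfl key, Finset.sum_range_sub' d]
  have h0 : d 0 = 0 := by simp [hd, hY0]
  have hJ' : d J = 0 := by simp [hd, hPJ]
  have := hsum
  rw [h0, hJ', sub_zero, Finset.sum_sub_distrib, sub_eq_zero] at this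
  exact this
end

section
/- Let J be a positive integer, τ > 0 a real number, and let F : {0, …, J−1} → V. Suppose Y : {0, …, J} → V satisfies Y_0 = 0 and Y_{j+1} − Y_j = τ A Y_{j+1} + F_j for all 0 ≤ j < J. Then Σ_{j=0}^{J−1} ‖Y_{j+1} − Y_j‖² ≤ Σ_{j=0}^{J−1} ‖F_j‖². -/
open scoped RealInnerProductSpace

/-- Jump estimate (equation (4.22), explicit constant) for the implicit Euler
scheme with a symmetric negative semidefinite `A`: the sum of squared jumps is
controlled by the sum of squared source increments. -/
theorem stmt_8 {V : Type*} [NormedAddCommGroup V] [InnerProductSpace ℝ V]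
    (A : V →ₗ[ℝ] V) (hAsym : ∀ v w : V, ⟪A v, w⟫ = ⟪v, A w⟫)
    (hAneg : ∀ v : V, ⟪A v, v⟫ ≤ 0)
    (J : ℕ) (hJ : 0 < J) (τ : ℝ) (hτ : 0 < τ)
    (F : ℕ → V) (Y : ℕ → V) (hY0 : Y 0 = 0)
    (hY : ∀ j < J, Y (j + 1) - Y j = τ • A (Y (j + 1)) + F j) :
    ∑ j ∈ Finset.range J, ‖Y (j + 1) - Y j‖ ^ 2 ≤ ∑ j ∈ Finset.range J, ‖F j‖ ^ 2 := by
  set q : ℕ → ℝ := fun j => ⟪A (Y j), Y j⟫ with hq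
  have key : ∀ j ∈ Finset.range J,
      ‖Y (j + 1) - Y j‖ ^ 2 ≤ τ * (q (j + 1) - q j) + ‖F j‖ ^ 2 := by
    intro j hj
    rw [Finset.mem_range] at hj
    set d := Y (j + 1) - Y j with hd
    have hrel := hY j hj
    -- inner identity
    have hid : ⟪d, A (Y (j + 1))⟫ = (q (j + 1) - q j + ⟪A d, d⟫) / 2 := by
      have h1 : ⟪A (Y (j+1)), Y j⟫ = ⟪A (Y j), Y (j+1)⟫ := by
        rw [hAsym, real_inner_comm]
      simp only [hd, hq, map_sub, inner_sub_left, inner_sub_right]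
      rw [real_inner_comm (Y (j+1)) (A (Y (j+1)))] at *
      linarith [h1, real_inner_comm (Y j) (A (Y (j+1)))]
    have hAd : ⟪A d, d⟫ ≤ 0 := hAneg d
    have hdd : ‖d‖ ^ 2 = τ * ⟪d, A (Y (j + 1))⟫ + ⟪d, F j⟫ := by
      have : ⟪d, d⟫ = ⟪d, τ • A (Y (j+1)) + F j⟫ := by rw [← hrel]
      rw [real_inner_self_eq_norm_sq] at this
      rw [this, inner_add_right, real_inner_smul_right]
    have hamgm : ⟪d, F j⟫ ≤ (‖d‖ ^ 2 + ‖F j‖ ^ 2) / 2 := by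
      have h1 := real_inner_le_norm d (F j)
      nlinarith [norm_nonneg d, norm_nonneg (F j), sq_nonneg (‖d‖ - ‖F j‖)]
    nlinarith [hτ.le]
  calc ∑ j ∈ Finset.range J, ‖Y (j + 1) - Y j‖ ^ 2
      ≤ ∑ j ∈ Finset.range J, (τ * (q (j + 1) - q j) + ‖F j‖ ^ 2) :=
        Finset.sum_le_sum key
    _ = τ * (q J - q 0) + ∑ j ∈ Finset.range J, ‖F j‖ ^ 2 := by
        rw [Finset.sum_add_distrib, ← Finset.mul_sum, Finset.sum_range_sub (fun n => q n)]
    _ ≤ ∑ j ∈ Finset.range J, ‖F j‖ ^ 2 := by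
        have h0 : q 0 = 0 := by simp [hq, hY0]
        have hJ' : q J ≤ 0 := hAneg _
        nlinarith [hτ.le]
end

section
/- Let J be a positive integer, τ > 0 a real number, and let g : {0, …, J−1} → V. Suppose Y : {0, …, J} → V satisfies Y_0 = 0 and Y_{j+1} − Y_j = τ A Y_{j+1} + τ g_j for all 0 ≤ j < J. Then Σ_{j=0}^{J} τ ‖Y_j‖² ≤ Σ_{j=0}^{J−1} τ ‖A^{−1} g_j‖². -/
open scoped RealInnerProductSpace

/-- Negative-order smoothing estimate (equation (4.23), explicit constant) for
the implicit Euler scheme with a symmetric negative definite `A` on a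
finite-dimensional real inner product space (so `A` is invertible; `Ring.inverse
A` is its inverse in `Module.End ℝ V`). -/
theorem stmt_9 {V : Type*} [NormedAddCommGroup V] [InnerProductSpace ℝ V]
    [FiniteDimensional ℝ V]
    (A : V →ₗ[ℝ] V) (hAsym : ∀ v w : V, ⟪A v, w⟫ = ⟪v, A w⟫)
    (hAneg : ∀ v : V, v ≠ 0 → ⟪A v, v⟫ < 0)
    (J : ℕ) (hJ : 0 < J) (τ : ℝ) (hτ : 0 < τ)
    (g : ℕ → V) (Y : ℕ → V) (hY0 : Y 0 = 0)
    (hY : ∀ j < J, Y (j + 1) - Y j = τ • A (Y (j + 1)) + τ • g j) :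
    ∑ j ∈ Finset.range (J + 1), τ * ‖Y j‖ ^ 2
      ≤ ∑ j ∈ Finset.range J, τ * ‖(Ring.inverse (A : Module.End ℝ V)) (g j)‖ ^ 2 := by
  set B : Module.End ℝ V := Ring.inverse (A : Module.End ℝ V) with hBdef
  -- A is injective, hence bijective, hence a unit
  have hinj : Function.Injective A := by
    rw [← LinearMap.ker_eq_bot, LinearMap.ker_eq_bot']
    intro x hx
    by_contra hne
    have := hAneg x hne
    rw [hx] at this
    simp at this
  have hbij : Function.Bijective A :=
    ⟨hinj, (LinearMap.injective_iff_surjective).mp hinj⟩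
  have hunit : IsUnit (A : Module.End ℝ V) := by
    rw [Module.End.isUnit_iff]; exact hbij
  have hBA : ∀ x : V, B (A x) = x := by
    intro x
    have h := Ring.inverse_mul_cancel (A : Module.End ℝ V) hunit
    have := congrArg (fun f : Module.End ℝ V => f x) h
    simpa [hBdef] using this
  have hAB : ∀ x : V, A (B x) = x := by
    intro x
    have h := Ring.mul_inverse_cancel (A : Module.End ℝ V) hunit
    have := congrArg (fun f : Module.End ℝ V => f x) h
    simpa [hBdef] using this
  -- B is symmetric
  have hBsym : ∀ v w : V, ⟪B v, w⟫ = ⟪v, B w⟫ := by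
    intro v w
    calc ⟪B v, w⟫ = ⟪B v, A (B w)⟫ := by rw [hAB]
      _ = ⟪A (B v), B w⟫ := (hAsym _ _).symm
      _ = ⟪v, B w⟫ := by rw [hAB]
  -- the quadratic form of B is nonpositive
  have hq : ∀ v : V, ⟪B v, v⟫ ≤ 0 := by
    intro v
    rcases eq_or_ne v 0 with h | h
    · simp [h]
    · have hx : B v ≠ 0 := fun h0 => h (by rw [← hAB v, h0, map_zero])
      have hlt := hAneg (B v) hx
      calc ⟪B v, v⟫ = ⟪B v, A (B v)⟫ := by rw [hAB]
        _ = ⟪A (B v), B v⟫ := (real_inner_comm _ _)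
        _ ≤ 0 := hlt.le
  -- per-step estimate
  have key : ∀ j < J, τ * ‖Y (j + 1)‖ ^ 2
      ≤ (⟪B (Y (j + 1)), Y (j + 1)⟫ - ⟪B (Y j), Y j⟫) + τ * ‖B (g j)‖ ^ 2 := by
    intro j hj
    set a := Y (j + 1)
    set b := Y j
    set c := B (g j) with hc
    have heq : B a - B b = τ • a + τ • c := by
      have h := congrArg B (hY j hj)
      rw [map_sub, map_add, map_smul, map_smul, hBA] at h
      exact h
    have h1 : ⟪B a, a⟫ - ⟪B b, a⟫ = τ * ‖a‖ ^ 2 + τ * ⟪c, a⟫ := by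
      have h := congrArg (fun v : V => ⟪v, a⟫) heq
      simpa [inner_sub_left, inner_add_left, real_inner_smul_left,
        real_inner_self_eq_norm_sq] using h
    have hsymba : ⟪B a, b⟫ = ⟪B b, a⟫ := by
      rw [hBsym a b, real_inner_comm]
    have hexp : ⟪B (a - b), a - b⟫
        = ⟪B a, a⟫ - ⟪B a, b⟫ - ⟪B b, a⟫ + ⟪B b, b⟫ := by
      rw [map_sub, inner_sub_left, inner_sub_right, inner_sub_right]
      ring
    have h3 : ⟪B a, a⟫ - ⟪B b, a⟫ ≤ (⟪B a, a⟫ - ⟪B b, b⟫) / 2 := by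
      have := hq (a - b)
      linarith [hexp, hsymba]
    have hcs : -⟪c, a⟫ ≤ ‖c‖ * ‖a‖ := by
      have h := abs_real_inner_le_norm c a
      have := abs_le.mp h
      linarith [this.1]
    have hym : ‖c‖ * ‖a‖ ≤ (‖c‖ ^ 2 + ‖a‖ ^ 2) / 2 := by
      nlinarith [sq_nonneg (‖c‖ - ‖a‖)]
    nlinarith [h1, h3, hcs, hym, hτ.le]
  -- sum up, telescope
  have htel : ∑ j ∈ Finset.range J,
      (⟪B (Y (j + 1)), Y (j + 1)⟫ - ⟪B (Y j), Y j⟫)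
      = ⟪B (Y J), Y J⟫ - ⟪B (Y 0), Y 0⟫ :=
    Finset.sum_range_sub (fun j => ⟪B (Y j), Y j⟫) J
  have hsum : ∑ j ∈ Finset.range J, τ * ‖Y (j + 1)‖ ^ 2
      ≤ ⟪B (Y J), Y J⟫ - ⟪B (Y 0), Y 0⟫
        + ∑ j ∈ Finset.range J, τ * ‖B (g j)‖ ^ 2 := by
    calc ∑ j ∈ Finset.range J, τ * ‖Y (j + 1)‖ ^ 2
        ≤ ∑ j ∈ Finset.range J,
            ((⟪B (Y (j + 1)), Y (j + 1)⟫ - ⟪B (Y j), Y j⟫) + τ * ‖B (g j)‖ ^ 2) :=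
          Finset.sum_le_sum fun j hj => key j (Finset.mem_range.mp hj)
      _ = ⟪B (Y J), Y J⟫ - ⟪B (Y 0), Y 0⟫
          + ∑ j ∈ Finset.range J, τ * ‖B (g j)‖ ^ 2 := by
          rw [Finset.sum_add_distrib, htel]
  have h0 : ⟪B (Y 0), Y 0⟫ = 0 := by simp [hY0]
  have hJle := hq (Y J)
  calc ∑ j ∈ Finset.range (J + 1), τ * ‖Y j‖ ^ 2
      = (∑ j ∈ Finset.range J, τ * ‖Y (j + 1)‖ ^ 2) + τ * ‖Y 0‖ ^ 2 :=
        Finset.sum_range_succ' _ J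
    _ = ∑ j ∈ Finset.range J, τ * ‖Y (j + 1)‖ ^ 2 := by simp [hY0]
    _ ≤ ∑ j ∈ Finset.range J, τ * ‖B (g j)‖ ^ 2 := by
        rw [h0] at hsum; linarith
end
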